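/- arXiv:2406.12163 — 2 statements merged into one kernel-verified Lean document; each statement's English description precedes it below -/
import Mathlib

section
/- In every equivalence-equipped argumentation framework, a set S of arguments is a simple equivalence-preferred extension if and only if S is a wide equivalence-preferred extension. -/
namespace EEAF

variable {A : Type*}

/-- Equivalence closure of a set of arguments. -/
def cl (equiv : A → A → Prop) (S : Set A) : Set A := {u | ∃ v ∈ S, equiv u v}

/-- `S` is simple-conflict-free: no attacks among members of `S`. -/
def SimpleCF (att : A → A → Prop) (S : Set A) : Prop := ∀ u ∈ S, ∀ v ∈ S, ¬ att u v

/-- `S` is wide-conflict-free: its equivalence closure is simple-conflict-free. -/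
def WideCF (att equiv : A → A → Prop) (S : Set A) : Prop := SimpleCF att (cl equiv S)

/-- `S` simple-defends `u`. -/
def SimpleDef (att : A → A → Prop) (S : Set A) (u : A) : Prop :=
  ∀ v, att v u → ∃ w ∈ S, att w v

/-- `S` wide-defends `u`: it simple-defends every member of `cl {u}`. -/
def WideDef (att equiv : A → A → Prop) (S : Set A) (u : A) : Prop :=
  ∀ x ∈ cl equiv ({u} : Set A), SimpleDef att S x

/-- `S` is simple-admissible. -/
def SimpleAdm (att : A → A → Prop) (S : Set A) : Prop :=
  SimpleCF att S ∧ ∀ u ∈ S, SimpleDef att S u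

/-- `S` is wide-admissible. -/
def WideAdm (att equiv : A → A → Prop) (S : Set A) : Prop :=
  WideCF att equiv S ∧ ∀ u ∈ S, WideDef att equiv S u

/-- `S` is closed under equivalence. -/
def ClosedEquiv (equiv : A → A → Prop) (S : Set A) : Prop := S = cl equiv S

/-- Simple equivalence-complete extension. -/
def SimpleEqComplete (att equiv : A → A → Prop) (S : Set A) : Prop :=
  SimpleAdm att S ∧ ClosedEquiv equiv S

/-- Wide equivalence-complete extension. -/
def WideEqComplete (att equiv : A → A → Prop) (S : Set A) : Prop :=
  WideAdm att equiv S ∧ ClosedEquiv equiv S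

/-- Simple equivalence-preferred extension: a maximal simple equivalence-complete
extension w.r.t. set inclusion. -/
def SimpleEqPreferred (att equiv : A → A → Prop) (S : Set A) : Prop :=
  SimpleEqComplete att equiv S ∧ ∀ T, SimpleEqComplete att equiv T → S ⊆ T → T = S

/-- Wide equivalence-preferred extension. -/
def WideEqPreferred (att equiv : A → A → Prop) (S : Set A) : Prop :=
  WideEqComplete att equiv S ∧ ∀ T, WideEqComplete att equiv T → S ⊆ T → T = S

theorem simpleEqComplete_iff_wideEqComplete
    {att equiv : A → A → Prop} (heq : Equivalence equiv) (S : Set A) :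
    SimpleEqComplete att equiv S ↔ WideEqComplete att equiv S := by
  constructor
  · rintro ⟨⟨hcf, hdef⟩, hcl⟩
    refine ⟨⟨?_, ?_⟩, hcl⟩
    · unfold WideCF
      rw [← hcl]; exact hcf
    · intro u hu x hx
      obtain ⟨v, hv, hxv⟩ := hx
      have hvu : v = u := hv
      have hxS : x ∈ S := by
        rw [hcl]; exact ⟨u, hu, hvu ▸ hxv⟩
      exact hdef x hxS
  · rintro ⟨⟨hcf, hdef⟩, hcl⟩
    refine ⟨⟨?_, ?_⟩, hcl⟩
    · unfold WideCF at hcf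
      rw [← hcl] at hcf; exact hcf
    · intro u hu
      exact hdef u hu u ⟨u, rfl, heq.refl u⟩

/-- A set is a simple equivalence-preferred extension iff it is a wide
equivalence-preferred extension. -/
theorem simpleEqPreferred_iff_wideEqPreferred
    (A : Type*) [Fintype A] (att equiv : A → A → Prop) (heq : Equivalence equiv) :
    ∀ S : Set A, SimpleEqPreferred att equiv S ↔ WideEqPreferred att equiv S := by
  intro S
  unfold SimpleEqPreferred WideEqPreferred
  simp only [simpleEqComplete_iff_wideEqComplete heq]

end EEAF
end

section
/- Every equivalence-equipped argumentation framework has at least one wide-complete extension, at least one wide-preferred extension, and at least one wide-grounded extension. -/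
/-!
Dung's argument, carried over to wide defence. The characteristic operator `S ↦ {u | S
wide-defends u}` is monotone, preserves wide conflict-freeness and has equivalence-closed
values, so the wide-complete extensions are exactly its wide-conflict-free fixed points. By Zorn
there is a maximal wide-admissible set; applying the operator keeps it admissible and can only
enlarge it, so it is a fixed point, hence a wide-preferred extension. The least fixed point lies
below it, so it is wide-conflict-free too, and it is the wide-grounded extension.
-/

namespace EEAF

variable {A : Type*}

/-- `S` is closed under wide defence. -/
def ClosedWideDef (att equiv : A → A → Prop) (S : Set A) : Prop :=
  ∀ u, WideDef att equiv S u → u ∈ S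

/-- Wide-complete extension: wide-admissible and closed under both wide defence
and equivalence. -/
def WideComplete (att equiv : A → A → Prop) (S : Set A) : Prop :=
  WideAdm att equiv S ∧ ClosedWideDef att equiv S ∧ ClosedEquiv equiv S

section

variable {att equiv : A → A → Prop} {S T : Set A}

lemma cl_mono (h : S ⊆ T) : cl equiv S ⊆ cl equiv T :=
  fun _ ⟨v, hv, huv⟩ ↦ ⟨v, h hv, huv⟩

lemma subset_cl (heq : Equivalence equiv) : S ⊆ cl equiv S :=
  fun u hu ↦ ⟨u, hu, heq.refl u⟩

lemma WideCF.anti (hT : WideCF att equiv T) (h : S ⊆ T) : WideCF att equiv S :=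
  fun u hu v hv ↦ hT u (cl_mono h hu) v (cl_mono h hv)

variable (att equiv) in
def characteristic : Set A →o Set A where
  toFun S := {u | WideDef att equiv S u}
  monotone' _ _ h _ hu x hx v hv :=
    let ⟨w, hw, hwv⟩ := hu x hx v hv
    ⟨w, h hw, hwv⟩

lemma cl_characteristic (heq : Equivalence equiv) :
    cl equiv (characteristic att equiv S) = characteristic att equiv S := by
  refine (subset_cl heq).antisymm' ?_
  rintro u ⟨v, hv, huv⟩ x ⟨_, rfl, hxu⟩
  exact hv x ⟨v, rfl, heq.trans hxu huv⟩

lemma wideCF_characteristic (heq : Equivalence equiv) (hS : WideCF att equiv S) :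
    WideCF att equiv (characteristic att equiv S) := by
  rw [WideCF, cl_characteristic heq]
  intro u hu v hv hatt
  obtain ⟨w, hw, hwu⟩ := hv v ⟨v, rfl, heq.refl v⟩ u hatt
  obtain ⟨w', hw', hw'w⟩ := hu u ⟨u, rfl, heq.refl u⟩ w hwu
  exact hS w' (subset_cl heq hw') w (subset_cl heq hw) hw'w

lemma wideComplete_iff (heq : Equivalence equiv) :
    WideComplete att equiv S ↔ WideCF att equiv S ∧ characteristic att equiv S = S := by
  constructor
  · rintro ⟨⟨hcf, hdef⟩, hclosed, -⟩
    exact ⟨hcf, Set.Subset.antisymm hclosed hdef⟩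
  · rintro ⟨hcf, hfix⟩
    refine ⟨⟨hcf, hfix.symm.subset⟩, hfix.subset, ?_⟩
    rw [← hfix]
    exact (cl_characteristic heq).symm

lemma wideAdm_characteristic (heq : Equivalence equiv) (hS : WideAdm att equiv S) :
    WideAdm att equiv (characteristic att equiv S) :=
  ⟨wideCF_characteristic heq hS.1, (characteristic att equiv).monotone hS.2⟩

lemma wideAdm_sUnion {c : Set (Set A)} (hc : IsChain (· ⊆ ·) c)
    (hadm : ∀ S ∈ c, WideAdm att equiv S) : WideAdm att equiv (⋃₀ c) := by
  constructor
  · rintro u ⟨u', ⟨S, hS, hu'⟩, huu'⟩ v ⟨v', ⟨T, hT, hv'⟩, hvv'⟩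
    rcases hc.total hS hT with hST | hTS
    · exact (hadm T hT).1 u ⟨u', hST hu', huu'⟩ v ⟨v', hv', hvv'⟩
    · exact (hadm S hS).1 u ⟨u', hu', huu'⟩ v ⟨v', hTS hv', hvv'⟩
  · rintro u ⟨S, hS, hu⟩
    exact (characteristic att equiv).monotone (Set.subset_sUnion_of_mem hS) ((hadm S hS).2 u hu)

variable (att equiv) in
lemma exists_maximal_wideAdm : ∃ P, Maximal (WideAdm att equiv) P :=
  zorn_subset {S | WideAdm att equiv S} fun c hsub hc ↦
    ⟨⋃₀ c, wideAdm_sUnion hc hsub, fun _ ↦ Set.subset_sUnion_of_mem⟩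

lemma wideComplete_of_maximal (heq : Equivalence equiv) (hP : Maximal (WideAdm att equiv) S) :
    WideComplete att equiv S :=
  (wideComplete_iff heq).2
    ⟨hP.1.1, (hP.eq_of_subset (wideAdm_characteristic heq hP.1) hP.1.2).symm⟩

lemma wideComplete_lfp (heq : Equivalence equiv) (hT : WideComplete att equiv T) :
    WideComplete att equiv (characteristic att equiv).lfp := by
  have hlfp_sub : (characteristic att equiv).lfp ⊆ T :=
    (characteristic att equiv).lfp_le_fixed ((wideComplete_iff heq).1 hT).2
  exact (wideComplete_iff heq).2 ⟨hT.1.1.anti hlfp_sub, (characteristic att equiv).map_lfp⟩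

end

theorem exists_wide_complete_preferred_grounded_general
    (A : Type*) (att equiv : A → A → Prop) (heq : Equivalence equiv) :
    (∃ S : Set A, WideComplete att equiv S) ∧
    (∃ S : Set A, WideComplete att equiv S ∧
      ∀ T, WideComplete att equiv T → S ⊆ T → T = S) ∧
    (∃ S : Set A, WideComplete att equiv S ∧
      ∀ T, WideComplete att equiv T → T ⊆ S → T = S) := by
  obtain ⟨P, hP⟩ := exists_maximal_wideAdm att equiv
  have hPc : WideComplete att equiv P := wideComplete_of_maximal heq hP
  refine ⟨⟨P, hPc⟩, ⟨P, hPc, fun T hT hPT ↦ (hP.eq_of_subset hT.1 hPT).symm⟩,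
    ⟨_, wideComplete_lfp heq hPc, fun T hT hTG ↦ hTG.antisymm ?_⟩⟩
  exact (characteristic att equiv).lfp_le_fixed ((wideComplete_iff heq).1 hT).2

/-- Existence of wide-complete, wide-preferred and wide-grounded extensions. -/
theorem exists_wide_complete_preferred_grounded
    (A : Type*) [Fintype A] (att equiv : A → A → Prop) (heq : Equivalence equiv) :
    (∃ S : Set A, WideComplete att equiv S) ∧
    (∃ S : Set A, WideComplete att equiv S ∧
      ∀ T, WideComplete att equiv T → S ⊆ T → T = S) ∧
    (∃ S : Set A, WideComplete att equiv S ∧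
      ∀ T, WideComplete att equiv T → T ⊆ S → T = S) :=
  exists_wide_complete_preferred_grounded_general A att equiv heq

end EEAF
end
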